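/- Set H₁ = σ₁ P σ₁⁻¹ ∩ P. Then P is the disjoint union of the double cosets H₁·S_ψ and H₁·τ₁·S_ψ; that is, {I₄, τ₁} is a complete set of (H₁, S_ψ)-double coset representatives in P. -/

import Mathlib

open Matrix

variable (F : Type*) [Field F]

/-- The standard alternating matrix `J = [[0, I₂], [-I₂, 0]]`. -/
def Jmat : Matrix (Fin 2 ⊕ Fin 2) (Fin 2 ⊕ Fin 2) F := Matrix.fromBlocks 0 1 (-1) 0

/-- The symplectic group `Sp₄(F)`, as a set of matrices. -/
def Sp4 : Set (Matrix (Fin 2 ⊕ Fin 2) (Fin 2 ⊕ Fin 2) F) :=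
  {g | gᵀ * Jmat F * g = Jmat F}

/-- The Siegel parabolic subgroup `P` of `Sp₄(F)`, as a set of matrices. -/
def P4 : Set (Matrix (Fin 2 ⊕ Fin 2) (Fin 2 ⊕ Fin 2) F) :=
  {m | ∃ g X : Matrix (Fin 2) (Fin 2) F,
    IsUnit g ∧ (g⁻¹ * X)ᵀ = g⁻¹ * X ∧ m = Matrix.fromBlocks g X 0 (g⁻¹)ᵀ}

/-- `O₂(F, C) = {[[a, 0], [y, d]] : a² = 1, d ≠ 0, y ∈ F}`. -/
def O2C : Set (Matrix (Fin 2) (Fin 2) F) :=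
  {g | ∃ a d y : F, a ^ 2 = 1 ∧ d ≠ 0 ∧ g = !![a, 0; y, d]}

/-- `S_ψ = {[[g, X], [0, ᵗg⁻¹]] ∈ P : g ∈ O₂(F, C)}`. -/
def Spsi : Set (Matrix (Fin 2 ⊕ Fin 2) (Fin 2 ⊕ Fin 2) F) :=
  {m | ∃ g X : Matrix (Fin 2) (Fin 2) F,
    g ∈ O2C F ∧ IsUnit g ∧ (g⁻¹ * X)ᵀ = g⁻¹ * X ∧ m = Matrix.fromBlocks g X 0 (g⁻¹)ᵀ}

/-- `σ₁ = [[0,0,-1,0],[0,1,0,0],[1,0,0,0],[0,0,0,1]]`. -/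
def sig1 : Matrix (Fin 2 ⊕ Fin 2) (Fin 2 ⊕ Fin 2) F :=
  Matrix.fromBlocks !![0, 0; 0, 1] !![-1, 0; 0, 0] !![1, 0; 0, 0] !![0, 0; 0, 1]

/-- `σ₂ = [[0, -I₂], [I₂, 0]]`. -/
def sig2 : Matrix (Fin 2 ⊕ Fin 2) (Fin 2 ⊕ Fin 2) F := Matrix.fromBlocks 0 (-1) 1 0

/-- `τ₁ = diag(h₁, h₁)` with `h₁ = [[0,1],[1,0]]`. -/
def tau1 : Matrix (Fin 2 ⊕ Fin 2) (Fin 2 ⊕ Fin 2) F :=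
  Matrix.fromBlocks !![0, 1; 1, 0] 0 0 !![0, 1; 1, 0]

/-- Double coset `A · w · B`. -/
def DC {α : Type*} [Mul α] (A : Set α) (w : α) (B : Set α) : Set α :=
  {x | ∃ a ∈ A, ∃ b ∈ B, x = a * w * b}

/-- `H₁ = σ₁ P σ₁⁻¹ ∩ P`. -/
def H1 : Set (Matrix (Fin 2 ⊕ Fin 2) (Fin 2 ⊕ Fin 2) F) :=
  {m | ∃ p ∈ P4 F, m = sig1 F * p * (sig1 F)⁻¹} ∩ P4 F

/-!
Write elements of `P` as `levi g * unipotent Y` with `g ∈ GL₂` and `Y` symmetric. The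
top-left block of an element of `H₁` is lower triangular (conjugation by `σ₁` forces its
`(0, 1)` entry to vanish), and so is that of an element of `S_ψ`, while `τ₁ = levi w` for the
Weyl element `w`. Hence the top-left block of `H₁ S_ψ` lies in the lower Borel `B⁻`, and that
of `H₁ τ₁ S_ψ` in `B⁻ w B⁻`, where the `(0, 1)` entry never vanishes: the cosets are disjoint.
Conversely, `g ∈ B⁻` when `g₀₁ = 0`, and otherwise `g = b w u` with `b ∈ B⁻` and `u`
unipotent lower triangular, hence in `O₂(F, C)`; every lower-triangular `levi b` lies in
`H₁`, which gives the covering.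
-/

section SiegelBlocks

variable {n R : Type*} [DecidableEq n] [CommRing R]

def unipotent (Y : Matrix n n R) : Matrix (n ⊕ n) (n ⊕ n) R := fromBlocks 1 Y 0 1

lemma unipotent_zero : unipotent (0 : Matrix n n R) = 1 := fromBlocks_one

variable [Fintype n]

noncomputable def levi (g : Matrix n n R) : Matrix (n ⊕ n) (n ⊕ n) R := fromBlocks g 0 0 g⁻¹ᵀ

lemma levi_mul_unipotent (g Y : Matrix n n R) :
    levi g * unipotent Y = fromBlocks g (g * Y) 0 g⁻¹ᵀ := by
  simp [levi, unipotent, fromBlocks_multiply]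

lemma levi_mul (g h : Matrix n n R) : levi (g * h) = levi g * levi h := by
  simp [levi, fromBlocks_multiply, Matrix.mul_inv_rev]

lemma unipotent_mul (Y Z : Matrix n n R) : unipotent Y * unipotent Z = unipotent (Y + Z) := by
  simp [unipotent, fromBlocks_multiply, add_comm]

lemma levi_one : levi (1 : Matrix n n R) = 1 := by
  simp [levi]

lemma unipotent_mul_levi {g : Matrix n n R} (hg : IsUnit g) (Y : Matrix n n R) :
    unipotent Y * levi g = levi g * unipotent (g⁻¹ * Y * g⁻¹ᵀ) := by
  rw [levi_mul_unipotent, Matrix.mul_assoc, Matrix.mul_nonsing_inv_cancel_left _ _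
    ((isUnit_iff_isUnit_det g).1 hg)]
  simp [levi, unipotent, fromBlocks_multiply]

end SiegelBlocks

lemma toBlocks₁₁_mul {l m n o p q R : Type*} [Fintype l] [Fintype m]
    [NonUnitalNonAssocSemiring R]
    (A : Matrix (n ⊕ o) (l ⊕ m) R) (B : Matrix (l ⊕ m) (p ⊕ q) R) :
    (A * B).toBlocks₁₁ = A.toBlocks₁₁ * B.toBlocks₁₁ + A.toBlocks₁₂ * B.toBlocks₂₁ := by
  ext i j
  simp [toBlocks₁₁, toBlocks₁₂, toBlocks₂₁, mul_apply, Fintype.sum_sum_type]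

section LowerBorel

def weyl : Matrix (Fin 2) (Fin 2) F := !![0, 1; 1, 0]

def lowerBorel : Set (Matrix (Fin 2) (Fin 2) F) := {b | b 0 1 = 0 ∧ b 0 0 ≠ 0 ∧ b 1 1 ≠ 0}

lemma weyl_mul_weyl : weyl F * weyl F = 1 := by
  ext i j
  fin_cases i <;> fin_cases j <;> simp [weyl, mul_apply, Fin.sum_univ_two, one_apply]

variable {F}

lemma isUnit_of_mem_lowerBorel {b : Matrix (Fin 2) (Fin 2) F} (hb : b ∈ lowerBorel F) :
    IsUnit b := by
  obtain ⟨h01, h00, h11⟩ := hb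
  rw [isUnit_iff_isUnit_det, det_fin_two, h01, isUnit_iff_ne_zero]
  simpa using mul_ne_zero h00 h11

lemma mem_lowerBorel_of_isUnit {g : Matrix (Fin 2) (Fin 2) F} (hg : IsUnit g)
    (h01 : g 0 1 = 0) : g ∈ lowerBorel F := by
  have hdet := ((isUnit_iff_isUnit_det g).1 hg).ne_zero
  rw [det_fin_two, h01, zero_mul, sub_zero] at hdet
  exact ⟨h01, left_ne_zero_of_mul hdet, right_ne_zero_of_mul hdet⟩

lemma O2C_subset_lowerBorel : O2C F ⊆ lowerBorel F := by
  rintro _ ⟨a, d, y, ha, hd, rfl⟩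
  refine ⟨rfl, ?_, hd⟩
  rintro (rfl : a = 0)
  simp at ha

lemma lowerBorel_mul_apply_zero_one {b b' : Matrix (Fin 2) (Fin 2) F} (hb : b ∈ lowerBorel F)
    (hb' : b' ∈ lowerBorel F) : (b * b') 0 1 = 0 := by
  simp [mul_apply, Fin.sum_univ_two, hb.1, hb'.1]

lemma lowerBorel_mul_weyl_mul_apply_zero_one {b b' : Matrix (Fin 2) (Fin 2) F}
    (hb : b ∈ lowerBorel F) (hb' : b' ∈ lowerBorel F) : (b * weyl F * b') 0 1 ≠ 0 := by
  simpa [weyl, mul_apply, Fin.sum_univ_two, hb'.1] using mul_ne_zero hb.2.1 hb'.2.2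

lemma exists_lowerBorel_mul_weyl_mul_O2C {g : Matrix (Fin 2) (Fin 2) F} (hg : IsUnit g)
    (h01 : g 0 1 ≠ 0) : ∃ b ∈ lowerBorel F, ∃ u ∈ O2C F, g = b * weyl F * u := by
  have hdet := ((isUnit_iff_isUnit_det g).1 hg).ne_zero
  rw [det_fin_two] at hdet
  refine ⟨!![g 0 1, 0; g 1 1, -(g 0 0 * g 1 1 - g 0 1 * g 1 0) / g 0 1], ⟨rfl, h01, ?_⟩,
    !![1, 0; g 0 0 / g 0 1, 1], ⟨1, 1, _, one_pow 2, one_ne_zero, rfl⟩, ?_⟩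
  · exact div_ne_zero (neg_ne_zero.2 hdet) h01
  · ext i j
    fin_cases i <;> fin_cases j <;> simp [weyl, mul_apply, Fin.sum_univ_two] <;> field_simp
    ring

end LowerBorel

section Parabolic

variable {F}

lemma mem_P4_iff {m : Matrix (Fin 2 ⊕ Fin 2) (Fin 2 ⊕ Fin 2) F} :
    m ∈ P4 F ↔
      ∃ g Y : Matrix (Fin 2) (Fin 2) F, IsUnit g ∧ Yᵀ = Y ∧ m = levi g * unipotent Y := by
  constructor
  · rintro ⟨g, X, hg, hX, rfl⟩
    refine ⟨g, g⁻¹ * X, hg, hX, ?_⟩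
    rw [levi_mul_unipotent, mul_nonsing_inv_cancel_left _ _ ((isUnit_iff_isUnit_det g).1 hg)]
  · rintro ⟨g, Y, hg, hY, rfl⟩
    refine ⟨g, g * Y, hg, ?_, levi_mul_unipotent g Y⟩
    rwa [nonsing_inv_mul_cancel_left _ _ ((isUnit_iff_isUnit_det g).1 hg)]

lemma P4_mul {m m' : Matrix (Fin 2 ⊕ Fin 2) (Fin 2 ⊕ Fin 2) F} (hm : m ∈ P4 F)
    (hm' : m' ∈ P4 F) : m * m' ∈ P4 F := by
  obtain ⟨g, Y, hg, hY, rfl⟩ := mem_P4_iff.1 hm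
  obtain ⟨g', Y', hg', hY', rfl⟩ := mem_P4_iff.1 hm'
  refine mem_P4_iff.2 ⟨g * g', g'⁻¹ * Y * g'⁻¹ᵀ + Y', hg.mul hg', ?_, ?_⟩
  · simp [transpose_add, transpose_mul, hY, hY', Matrix.mul_assoc]
  · rw [levi_mul, ← unipotent_mul, Matrix.mul_assoc, ← Matrix.mul_assoc (unipotent Y),
      unipotent_mul_levi hg']
    simp only [Matrix.mul_assoc]

lemma levi_mem_P4 {g : Matrix (Fin 2) (Fin 2) F} (hg : IsUnit g) : levi g ∈ P4 F :=
  mem_P4_iff.2 ⟨g, 0, hg, transpose_zero, by rw [unipotent_zero, Matrix.mul_one]⟩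

lemma toBlocks₂₁_eq_zero_of_mem_P4 {m : Matrix (Fin 2 ⊕ Fin 2) (Fin 2 ⊕ Fin 2) F}
    (hm : m ∈ P4 F) : m.toBlocks₂₁ = 0 := by
  obtain ⟨g, X, -, -, rfl⟩ := hm
  rfl

lemma Spsi_subset_P4 : Spsi F ⊆ P4 F := by
  rintro m ⟨g, X, -, hg, hX, rfl⟩
  exact ⟨g, X, hg, hX, rfl⟩

lemma toBlocks₁₁_mem_O2C_of_mem_Spsi {m : Matrix (Fin 2 ⊕ Fin 2) (Fin 2 ⊕ Fin 2) F}
    (hm : m ∈ Spsi F) : m.toBlocks₁₁ ∈ O2C F := by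
  obtain ⟨g, X, hg, -, -, rfl⟩ := hm
  exact hg

lemma levi_mul_unipotent_mem_Spsi {g Y : Matrix (Fin 2) (Fin 2) F} (hg : g ∈ O2C F)
    (hY : Yᵀ = Y) : levi g * unipotent Y ∈ Spsi F := by
  have hdet := (isUnit_iff_isUnit_det g).1 (isUnit_of_mem_lowerBorel (O2C_subset_lowerBorel hg))
  refine ⟨g, g * Y, hg, (isUnit_iff_isUnit_det g).2 hdet, ?_, levi_mul_unipotent g Y⟩
  rwa [nonsing_inv_mul_cancel_left _ _ hdet]

end Parabolic

section Stabilizer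

variable {F}

lemma inv_lowerTriangular {p r : F} (hp : p ≠ 0) (hr : r ≠ 0) (q : F) :
    (!![p, 0; q, r])⁻¹ = !![p⁻¹, 0; -q / (p * r), r⁻¹] := by
  refine inv_eq_right_inv ?_
  ext i j
  fin_cases i <;> fin_cases j <;> simp [mul_apply, Fin.sum_univ_two] <;> field_simp
  ring

lemma sig1_inv :
    (sig1 F)⁻¹ = fromBlocks !![0, 0; 0, 1] !![1, 0; 0, 0] !![-1, 0; 0, 0] !![0, 0; 0, 1] := by
  refine inv_eq_right_inv ?_
  ext (i | i) (j | j) <;> fin_cases i <;> fin_cases j <;>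
    simp [sig1, mul_apply, Fintype.sum_sum_type, Fin.sum_univ_two, one_apply]

lemma tau1_eq_levi_weyl : tau1 F = levi (weyl F) := by
  rw [levi, inv_eq_right_inv (weyl_mul_weyl F), tau1, weyl]
  congr
  ext i j
  fin_cases i <;> fin_cases j <;> rfl

lemma sig1_conj_apply_inl_zero_inl_one {p : Matrix (Fin 2 ⊕ Fin 2) (Fin 2 ⊕ Fin 2) F}
    (hp : p ∈ P4 F) : (sig1 F * p * (sig1 F)⁻¹) (.inl 0) (.inl 1) = 0 := by
  obtain ⟨g, X, -, -, rfl⟩ := hp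
  rw [sig1_inv]
  simp [sig1, mul_apply, Fintype.sum_sum_type, Fin.sum_univ_two]

lemma toBlocks₁₁_mem_lowerBorel_of_mem_H1 {m : Matrix (Fin 2 ⊕ Fin 2) (Fin 2 ⊕ Fin 2) F}
    (hm : m ∈ H1 F) : m.toBlocks₁₁ ∈ lowerBorel F := by
  obtain ⟨⟨p, hp, hconj⟩, g, X, hg, -, rfl⟩ := hm
  refine mem_lowerBorel_of_isUnit hg ?_
  have := sig1_conj_apply_inl_zero_inl_one hp
  rwa [← hconj] at this

lemma levi_lowerTriangular_mem_H1 {p r : F} (hp : p ≠ 0) (hr : r ≠ 0) (q : F) :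
    levi !![p, 0; q, r] ∈ H1 F := by
  -- the witness is `σ₁⁻¹ · levi !![p, 0; q, r] · σ₁`, written as `levi _ * unipotent _`
  have hunit : IsUnit !![p, 0; q, r] := isUnit_of_mem_lowerBorel ⟨rfl, hp, hr⟩
  refine ⟨⟨levi !![p⁻¹, 0; 0, r] * unipotent !![0, -q / r; -q / r, 0],
    mem_P4_iff.2 ⟨_, _, isUnit_of_mem_lowerBorel ⟨rfl, inv_ne_zero hp, hr⟩, ?_, rfl⟩, ?_⟩,
    levi_mem_P4 hunit⟩
  · ext i j; fin_cases i <;> fin_cases j <;> rfl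
  · rw [sig1_inv, levi_mul_unipotent, levi, inv_lowerTriangular hp hr,
      inv_lowerTriangular (inv_ne_zero hp) hr]
    ext (i | i) (j | j) <;> fin_cases i <;> fin_cases j <;>
      simp [sig1, mul_apply, Fintype.sum_sum_type, Fin.sum_univ_two] <;> field_simp

lemma levi_mem_H1 {b : Matrix (Fin 2) (Fin 2) F} (hb : b ∈ lowerBorel F) : levi b ∈ H1 F := by
  obtain ⟨h01, h00, h11⟩ := hb
  rw [eta_fin_two b, h01]
  exact levi_lowerTriangular_mem_H1 h00 h11 _

end Stabilizer

section DoubleCosets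

variable {F}

lemma one_mem_P4 : (1 : Matrix (Fin 2 ⊕ Fin 2) (Fin 2 ⊕ Fin 2) F) ∈ P4 F :=
  levi_one (n := Fin 2) (R := F) ▸ levi_mem_P4 isUnit_one

lemma tau1_mem_P4 : tau1 F ∈ P4 F := by
  rw [tau1_eq_levi_weyl]
  exact levi_mem_P4 (.of_mul_eq_one _ (weyl_mul_weyl F))

lemma DC_subset_P4 {A B : Set (Matrix (Fin 2 ⊕ Fin 2) (Fin 2 ⊕ Fin 2) F)}
    {w : Matrix (Fin 2 ⊕ Fin 2) (Fin 2 ⊕ Fin 2) F} (hA : A ⊆ P4 F) (hw : w ∈ P4 F)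
    (hB : B ⊆ P4 F) : DC A w B ⊆ P4 F := by
  rintro _ ⟨a, ha, b, hb, rfl⟩
  exact P4_mul (P4_mul (hA ha) hw) (hB hb)

lemma P4_subset_DC_union : P4 F ⊆ DC (H1 F) 1 (Spsi F) ∪ DC (H1 F) (tau1 F) (Spsi F) := by
  intro m hm
  obtain ⟨g, Y, hg, hY, rfl⟩ := mem_P4_iff.1 hm
  by_cases h01 : g 0 1 = 0
  · have hY' : unipotent Y ∈ Spsi F := by
      simpa [levi_one] using
        levi_mul_unipotent_mem_Spsi ⟨1, 1, 0, one_pow 2, one_ne_zero, one_fin_two⟩ hY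
    exact Or.inl ⟨levi g, levi_mem_H1 (mem_lowerBorel_of_isUnit hg h01), _, hY', by rw [mul_one]⟩
  · obtain ⟨b, hb, u, hu, rfl⟩ := exists_lowerBorel_mul_weyl_mul_O2C hg h01
    refine Or.inr ⟨levi b, levi_mem_H1 hb, _, levi_mul_unipotent_mem_Spsi hu hY, ?_⟩
    rw [tau1_eq_levi_weyl, levi_mul, levi_mul, Matrix.mul_assoc (levi b * levi (weyl F))]

lemma toBlocks₁₁_apply_zero_one_of_mem_DC_one {x : Matrix (Fin 2 ⊕ Fin 2) (Fin 2 ⊕ Fin 2) F}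
    (hx : x ∈ DC (H1 F) 1 (Spsi F)) : x.toBlocks₁₁ 0 1 = 0 := by
  obtain ⟨h, hh, s, hs, rfl⟩ := hx
  rw [Matrix.mul_one, toBlocks₁₁_mul, toBlocks₂₁_eq_zero_of_mem_P4 (Spsi_subset_P4 hs),
    Matrix.mul_zero, add_zero]
  exact lowerBorel_mul_apply_zero_one (toBlocks₁₁_mem_lowerBorel_of_mem_H1 hh)
    (O2C_subset_lowerBorel (toBlocks₁₁_mem_O2C_of_mem_Spsi hs))

lemma toBlocks₁₁_apply_zero_one_ne_zero_of_mem_DC_tau1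
    {x : Matrix (Fin 2 ⊕ Fin 2) (Fin 2 ⊕ Fin 2) F} (hx : x ∈ DC (H1 F) (tau1 F) (Spsi F)) :
    x.toBlocks₁₁ 0 1 ≠ 0 := by
  obtain ⟨h, hh, s, hs, rfl⟩ := hx
  rw [toBlocks₁₁_mul, toBlocks₂₁_eq_zero_of_mem_P4 (Spsi_subset_P4 hs), Matrix.mul_zero,
    add_zero, toBlocks₁₁_mul, toBlocks₂₁_eq_zero_of_mem_P4 tau1_mem_P4, Matrix.mul_zero, add_zero,
    tau1_eq_levi_weyl]
  exact lowerBorel_mul_weyl_mul_apply_zero_one (toBlocks₁₁_mem_lowerBorel_of_mem_H1 hh)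
    (O2C_subset_lowerBorel (toBlocks₁₁_mem_O2C_of_mem_Spsi hs))

end DoubleCosets

theorem H1_Spsi_double_cosets :
    (P4 F = DC (H1 F) 1 (Spsi F) ∪ DC (H1 F) (tau1 F) (Spsi F)) ∧
    Disjoint (DC (H1 F) 1 (Spsi F)) (DC (H1 F) (tau1 F) (Spsi F)) := by
  have hH1 : H1 F ⊆ P4 F := fun _ hm => hm.2
  refine ⟨P4_subset_DC_union.antisymm ?_, Set.disjoint_left.2 fun x hx hx' => ?_⟩
  · exact Set.union_subset (DC_subset_P4 hH1 one_mem_P4 Spsi_subset_P4)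
      (DC_subset_P4 hH1 tau1_mem_P4 Spsi_subset_P4)
  · exact toBlocks₁₁_apply_zero_one_ne_zero_of_mem_DC_tau1 hx'
      (toBlocks₁₁_apply_zero_one_of_mem_DC_one hx)
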